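/- arXiv:math/0504308 — 2 statements merged into one kernel-verified Lean document; each statement's English description precedes it below -/
import Mathlib

section
/- Let A be an n×n real matrix such that A + Aᵀ is negative definite, and let p_1,…,p_{n−1} ≥ 0. Then the associated semidefinite program has an optimal solution M₀ with rank(M₀) ≤ ⌊(√(8n+1) − 1)/2⌋; that is, there exists M₀ ⪰ 0 with ⟨A_i, M₀⟩ = −p_i for i = 1,…,n−1, rank(M₀) ≤ ⌊(√(8n+1) − 1)/2⌋, and ⟨A_n, M₀⟩ ≥ ⟨A_n, M⟩ for every feasible M. -/
open Matrix

/-- Trace inner product on square matrices: ⟨X, Y⟩ = tr(XY). -/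
noncomputable def ip {m : ℕ} (X Y : Matrix (Fin m) (Fin m) ℝ) : ℝ := (X * Y).trace

/-- For an m×m matrix `A`, the symmetric matrix `A_i = e_i a_iᵀ + a_i e_iᵀ`,
whose i-th row and column equal the i-th row of `A` (with (i,i) entry `2 A i i`),
all other entries zero. -/
noncomputable def sdpMat {m : ℕ} (A : Matrix (Fin m) (Fin m) ℝ) (i : Fin m) :
    Matrix (Fin m) (Fin m) ℝ :=
  Matrix.of fun k l => (if k = i then A i l else 0) + (if l = i then A i k else 0)

/-- Feasibility for the semidefinite program associated to an (n+1)×(n+1) matrix `A`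
and data `p`: `M ⪰ 0` and `⟨A_i, M⟩ = -p_i` for every non-final index `i`. -/
def Feasible {n : ℕ} (A : Matrix (Fin (n + 1)) (Fin (n + 1)) ℝ)
    (p : Fin (n + 1) → ℝ) (M : Matrix (Fin (n + 1)) (Fin (n + 1)) ℝ) : Prop :=
  M.PosSemidef ∧ ∀ i : Fin (n + 1), i ≠ Fin.last n → ip (sdpMat A i) M = -(p i)

/-!
Since `∑ᵢ Aᵢ = A + Aᵀ`, on the feasible set the objective `⟨A_N, M⟩` equals `⟨A + Aᵀ, M⟩` plus a
constant. As `-(A + Aᵀ)` is positive definite, `⟨-(A + Aᵀ), M⟩` controls the trace, hence all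
entries, of a positive semidefinite `M`, so the superlevel sets of the objective are compact and an
optimal solution exists (a diagonal matrix is feasible because the diagonal of `A` is negative).

Its rank is then lowered as in Barvinok and Pataki. Write an optimal `M` of rank `r` as `V Vᵀ` with
`V` of size `N × r`. If `r (r + 1) / 2 > N`, some nonzero symmetric `S` of size `r` satisfies
`⟨Aᵢ, V S Vᵀ⟩ = 0` for all `i`, and for a suitable `t` the matrix `1 + t S` is positive
semidefinite and singular. Then `V (1 + t S) Vᵀ` has the same values `⟨Aᵢ, ·⟩`, so it is again
optimal, and its rank is smaller. Repeating this ends with `r (r + 1) ≤ 2 N`, that is,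
`r ≤ ⌊(√(8N + 1) - 1) / 2⌋`.
-/

lemma Sym2.two_mul_card (ι : Type*) [Fintype ι] :
    2 * Fintype.card (Sym2 ι) = Fintype.card ι * (Fintype.card ι + 1) := by
  have := Nat.add_one_mul_choose_eq (Fintype.card ι) 1
  rw [Nat.choose_one_right] at this
  rw [Sym2.card]
  linarith

namespace Matrix

section

variable {n : Type*} [Fintype n]

lemma PosSemidef.two_mul_abs_apply_le {M : Matrix n n ℝ} (hM : M.PosSemidef) (k l : n) :
    2 * |M k l| ≤ M k k + M l l := by
  classical
  have hform (s : ℝ) : 0 ≤ M k k + s * (M k l + M l k) + s ^ 2 * M l l := by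
    have := hM.dotProduct_mulVec_nonneg (Pi.single k 1 + s • Pi.single l 1)
    simp only [star_trivial, mulVec_add, mulVec_smul, dotProduct_add, add_dotProduct,
      dotProduct_smul, smul_dotProduct, mulVec_single_one, single_one_dotProduct, col_apply,
      smul_eq_mul] at this
    linarith
  have hsymm : M l k = M k l := by simpa using hM.1.apply k l
  rw [hsymm] at hform
  cases abs_cases (M k l) <;> nlinarith [hform 1, hform (-1)]

lemma PosSemidef.abs_apply_le_trace {M : Matrix n n ℝ} (hM : M.PosSemidef) (k l : n) :
    |M k l| ≤ M.trace := by
  have hdiag (i : n) : M i i ≤ M.trace :=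
    Finset.single_le_sum (f := M.diag) (fun j _ ↦ hM.diag_nonneg) (Finset.mem_univ i)
  linarith [hM.two_mul_abs_apply_le k l, hdiag k, hdiag l]

lemma isClosed_setOf_posSemidef : IsClosed {M : Matrix n n ℝ | M.PosSemidef} := by
  simp only [posSemidef_iff_dotProduct_mulVec, Set.ofPred_and, Set.ofPred_forall]
  refine (isClosed_eq continuous_id.matrix_conjTranspose continuous_id).inter
    (isClosed_iInter fun x ↦ isClosed_le continuous_const ?_)
  exact continuous_const.dotProduct (continuous_id.matrix_mulVec continuous_const)

end

section Spectral

variable {n : Type*} [Fintype n] [DecidableEq n]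

lemma IsHermitian.smul_one_add_smul_eq {S : Matrix n n ℝ} (hS : S.IsHermitian) (a t : ℝ) :
    a • (1 : Matrix n n ℝ) + t • S =
      (hS.eigenvectorUnitary : Matrix n n ℝ) * diagonal (fun i ↦ a + t * hS.eigenvalues i) *
        star (hS.eigenvectorUnitary : Matrix n n ℝ) := by
  have hdiag : diagonal (fun i ↦ a + t * hS.eigenvalues i) =
      a • (1 : Matrix n n ℝ) + t • diagonal (RCLike.ofReal ∘ hS.eigenvalues) := by
    ext i j; by_cases h : i = j <;> simp [diagonal, h]
  conv_lhs => rw [hS.spectral_theorem]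
  rw [hdiag, Unitary.conjStarAlgAut_apply, mul_add, add_mul]
  simp only [Matrix.mul_smul, Matrix.smul_mul, mul_one,
    Unitary.mul_star_self_of_mem hS.eigenvectorUnitary.2]

lemma IsHermitian.posSemidef_smul_one_add_smul {S : Matrix n n ℝ} (hS : S.IsHermitian)
    {a t : ℝ} (h : ∀ i, 0 ≤ a + t * hS.eigenvalues i) : (a • 1 + t • S).PosSemidef := by
  rw [hS.smul_one_add_smul_eq, star_eq_conjTranspose]
  exact (PosSemidef.diagonal h).mul_mul_conjTranspose_same _

lemma IsHermitian.rank_smul_one_add_smul {S : Matrix n n ℝ} (hS : S.IsHermitian) (a t : ℝ) :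
    (a • 1 + t • S).rank = Fintype.card {i // a + t * hS.eigenvalues i ≠ 0} := by
  rw [hS.smul_one_add_smul_eq, ← Unitary.coe_star]
  simp [-isUnit_iff_ne_zero, -Unitary.coe_star, rank_diagonal]

lemma IsHermitian.exists_posSemidef_one_add_smul_rank_lt {S : Matrix n n ℝ} (hS : S.IsHermitian)
    (hS0 : S ≠ 0) : ∃ t : ℝ, (1 + t • S).PosSemidef ∧ (1 + t • S).rank < Fintype.card n := by
  have hev : hS.eigenvalues ≠ 0 := mt hS.eigenvalues_eq_zero_iff.1 hS0
  have : Nonempty n := not_isEmpty_iff.1 fun _ ↦ hev (Subsingleton.elim _ _)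
  -- for `t = -1 / λⱼ` with `|λⱼ|` maximal, the eigenvalues `1 - λᵢ / λⱼ` of `1 + t • S` are
  -- nonnegative and vanish at `j`
  obtain ⟨j, hj⟩ := Finite.exists_max fun i ↦ |hS.eigenvalues i|
  have hj0 : hS.eigenvalues j ≠ 0 := fun h0 ↦
    hev <| funext fun i ↦ abs_nonpos_iff.1 ((hj i).trans_eq (by rw [h0, abs_zero]))
  refine ⟨-(hS.eigenvalues j)⁻¹, ?_, ?_⟩ <;> rw [← one_smul ℝ (1 : Matrix n n ℝ)]
  · refine hS.posSemidef_smul_one_add_smul fun i ↦ ?_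
    have : hS.eigenvalues i / hS.eigenvalues j ≤ 1 :=
      (abs_le.1 ((abs_div _ _).trans_le (div_le_one_of_le₀ (hj i) (abs_nonneg _)))).2
    rw [neg_mul, inv_mul_eq_div]
    linarith
  · rw [hS.rank_smul_one_add_smul]
    exact Fintype.card_subtype_lt (x := j) (by simp [inv_mul_cancel₀ hj0])

lemma PosDef.exists_pos_posSemidef_sub_smul_one {B : Matrix n n ℝ} (hB : B.PosDef) :
    ∃ ε : ℝ, 0 < ε ∧ (B - ε • 1).PosSemidef := by
  obtain ⟨ε, hε, hεle⟩ : ∃ ε : ℝ, 0 < ε ∧ ∀ i, ε ≤ hB.1.eigenvalues i := by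
    rcases isEmpty_or_nonempty n with hn | hn
    · exact ⟨1, one_pos, fun i ↦ isEmptyElim i⟩
    · obtain ⟨j, hj⟩ := Finite.exists_min hB.1.eigenvalues
      exact ⟨_, hB.eigenvalues_pos j, hj⟩
  refine ⟨ε, hε, ?_⟩
  rw [sub_eq_neg_add, ← neg_smul, ← one_smul ℝ B]
  exact hB.1.posSemidef_smul_one_add_smul fun i ↦ by linarith [hεle i]

lemma PosSemidef.exists_eq_mul_transpose {M : Matrix n n ℝ} (hM : M.PosSemidef) :
    ∃ V : Matrix n {i // hM.1.eigenvalues i ≠ 0} ℝ, M = V * Vᵀ := by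
  set U := (hM.1.eigenvectorUnitary : Matrix n n ℝ)
  set W := U * diagonal fun i ↦ √(hM.1.eigenvalues i)
  have hW : M = W * Wᵀ := by
    have hsq : (diagonal fun i ↦ √(hM.1.eigenvalues i)) * (diagonal fun i ↦ √(hM.1.eigenvalues i))
        = diagonal hM.1.eigenvalues := by
      rw [diagonal_mul_diagonal]
      exact congrArg diagonal (funext fun i ↦ Real.mul_self_sqrt (hM.eigenvalues_nonneg i))
    have := hM.1.smul_one_add_smul_eq 0 1
    simp only [zero_smul, one_smul, zero_add, one_mul] at this
    rw [this, star_eq_conjTranspose, conjTranspose_eq_transpose_of_trivial, transpose_mul,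
      diagonal_transpose, ← hsq]
    simp only [W, U, Matrix.mul_assoc]
  refine ⟨W.submatrix id Subtype.val, ?_⟩
  ext k l
  refine (congrFun (congrFun hW k) l).trans ?_
  rw [mul_apply, mul_apply,
    ← Fintype.sum_subtype_add_sum_subtype (fun i ↦ hM.1.eigenvalues i ≠ 0)]
  simp only [W, mul_diagonal, transpose_apply, submatrix_apply, id, add_eq_left]
  exact Finset.sum_eq_zero fun i _ ↦ by simp [of_not_not i.2]

end Spectral

variable {n : Type*} [Fintype n]

lemma PosSemidef.trace_mul_nonneg {P M : Matrix n n ℝ} (hP : P.PosSemidef) (hM : M.PosSemidef) :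
    0 ≤ (P * M).trace := by
  classical
  obtain ⟨V, hV⟩ := hM.exists_eq_mul_transpose
  rw [hV, ← Matrix.mul_assoc, trace_mul_comm, ← Matrix.mul_assoc,
    ← conjTranspose_eq_transpose_of_trivial]
  exact (hP.conjTranspose_mul_mul_same V).trace_nonneg

lemma isCompact_setOf_posSemidef_trace_mul_le {B : Matrix n n ℝ} (hB : B.PosDef) (C : ℝ) :
    IsCompact {M : Matrix n n ℝ | M.PosSemidef ∧ (B * M).trace ≤ C} := by
  classical
  obtain ⟨ε, hε, hBε⟩ := hB.exists_pos_posSemidef_sub_smul_one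
  have hclosed : IsClosed {M : Matrix n n ℝ | M.PosSemidef ∧ (B * M).trace ≤ C} :=
    isClosed_setOf_posSemidef.inter <|
      isClosed_le (continuous_const.matrix_mul continuous_id).matrix_trace continuous_const
  refine .of_isClosed_subset (isCompact_univ_pi fun _ ↦ isCompact_univ_pi fun _ ↦
    isCompact_Icc (a := -(C / ε)) (b := C / ε)) hclosed fun M ⟨hM, hMC⟩ k _ l _ ↦ ?_
  have htrace : ε * M.trace ≤ (B * M).trace := by
    have := hBε.trace_mul_nonneg hM
    rwa [Matrix.sub_mul, trace_sub, smul_mul, one_mul, trace_smul, smul_eq_mul, sub_nonneg] at this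
  have hkl : |M k l| ≤ C / ε := (hM.abs_apply_le_trace k l).trans <| by
    rw [le_div_iff₀ hε]; linarith
  exact abs_le.1 hkl

section RankReduction

variable {ι : Type*}

def ofSym2 : (Sym2 ι → ℝ) →ₗ[ℝ] Matrix ι ι ℝ where
  toFun c := of fun i j ↦ c s(i, j)
  map_add' _ _ := rfl
  map_smul' _ _ := rfl

@[simp] lemma ofSym2_apply (c : Sym2 ι → ℝ) (i j : ι) : ofSym2 c i j = c s(i, j) := rfl

lemma ofSym2_isHermitian (c : Sym2 ι → ℝ) : (ofSym2 c).IsHermitian := by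
  ext i j
  simp [Sym2.eq_swap]

lemma ofSym2_injective : Function.Injective (ofSym2 : (Sym2 ι → ℝ) → Matrix ι ι ℝ) :=
  fun _ _ h ↦ funext <| Sym2.ind fun i j ↦ congrFun (congrFun h i) j

lemma exists_isHermitian_ne_zero_map_eq_zero [Fintype ι] {E : Type*} [AddCommGroup E]
    [Module ℝ E] [FiniteDimensional ℝ E] (f : Matrix ι ι ℝ →ₗ[ℝ] E)
    (h : Module.finrank ℝ E < Fintype.card (Sym2 ι)) :
    ∃ S : Matrix ι ι ℝ, S.IsHermitian ∧ S ≠ 0 ∧ f S = 0 := by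
  have hker : LinearMap.ker (f ∘ₗ ofSym2) ≠ ⊥ :=
    LinearMap.ker_ne_bot_of_finrank_lt (by rwa [Module.finrank_fintype_fun_eq_card])
  obtain ⟨c, hc, hc0⟩ := (Submodule.ne_bot_iff _).1 hker
  refine ⟨ofSym2 c, ofSym2_isHermitian c, fun h0 ↦ hc0 <| ofSym2_injective ?_, hc⟩
  rw [h0, map_zero]

variable {n E : Type*} [AddCommGroup E] [Module ℝ E] [FiniteDimensional ℝ E]

lemma exists_posSemidef_rank_lt_map_mul_eq [Fintype ι] [DecidableEq ι]
    (L : Matrix n n ℝ →ₗ[ℝ] E) (V : Matrix n ι ℝ)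
    (h : 2 * Module.finrank ℝ E < Fintype.card ι * (Fintype.card ι + 1)) :
    ∃ T : Matrix ι ι ℝ, T.PosSemidef ∧ T.rank < Fintype.card ι ∧ L (V * T * Vᵀ) = L (V * Vᵀ) := by
  let congrV : Matrix ι ι ℝ →ₗ[ℝ] Matrix n n ℝ :=
    { toFun S := V * S * Vᵀ
      map_add' _ _ := by rw [Matrix.mul_add, Matrix.add_mul]
      map_smul' _ _ := by rw [Matrix.mul_smul, Matrix.smul_mul]; rfl }
  obtain ⟨S, hS, hS0, hLS⟩ := exists_isHermitian_ne_zero_map_eq_zero (L ∘ₗ congrV) <| by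
    linarith [Sym2.two_mul_card ι]
  obtain ⟨t, hpsd, hrank⟩ := hS.exists_posSemidef_one_add_smul_rank_lt hS0
  refine ⟨1 + t • S, hpsd, hrank, ?_⟩
  have : V * (1 + t • S) * Vᵀ = V * Vᵀ + congrV (t • S) := by
    rw [Matrix.mul_add, Matrix.add_mul, Matrix.mul_one]; rfl
  rw [this, map_add, map_smul, map_smul, show L (congrV S) = 0 from hLS, smul_zero, add_zero]

variable [Fintype n] [DecidableEq n]

lemma PosSemidef.exists_rank_lt_map_eq (L : Matrix n n ℝ →ₗ[ℝ] E) {M : Matrix n n ℝ}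
    (hM : M.PosSemidef) (h : 2 * Module.finrank ℝ E < M.rank * (M.rank + 1)) :
    ∃ M' : Matrix n n ℝ, M'.PosSemidef ∧ L M' = L M ∧ M'.rank < M.rank := by
  obtain ⟨V, hV⟩ := hM.exists_eq_mul_transpose
  have hcard : Fintype.card {i // hM.1.eigenvalues i ≠ 0} = M.rank :=
    hM.1.rank_eq_card_non_zero_eigs.symm
  obtain ⟨T, hT, hTrank, hLT⟩ := exists_posSemidef_rank_lt_map_mul_eq L V (hcard ▸ h)
  refine ⟨V * T * Vᵀ, ?_, hLT.trans (congrArg L hV.symm), ?_⟩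
  · rw [← conjTranspose_eq_transpose_of_trivial]
    exact hT.mul_mul_conjTranspose_same V
  · calc (V * T * Vᵀ).rank ≤ T.rank := (rank_mul_le_left _ _).trans (rank_mul_le_right _ _)
      _ < M.rank := hcard ▸ hTrank

theorem PosSemidef.exists_rank_mul_add_one_le_map_eq (L : Matrix n n ℝ →ₗ[ℝ] E) {M : Matrix n n ℝ}
    (hM : M.PosSemidef) :
    ∃ M' : Matrix n n ℝ, M'.PosSemidef ∧ L M' = L M ∧
      M'.rank * (M'.rank + 1) ≤ 2 * Module.finrank ℝ E := by
  induction hr : M.rank using Nat.strong_induction_on generalizing M with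
  | _ r ih =>
    by_cases hsmall : r * (r + 1) ≤ 2 * Module.finrank ℝ E
    · exact ⟨M, hM, rfl, hr ▸ hsmall⟩
    obtain ⟨M', hM', hLM', hlt⟩ := hM.exists_rank_lt_map_eq L (hr ▸ not_le.1 hsmall)
    obtain ⟨M'', hM'', hLM'', hsmall''⟩ := ih _ (hr ▸ hlt) hM' rfl
    exact ⟨M'', hM'', hLM''.trans hLM', hsmall''⟩

end RankReduction

end Matrix

section SDP

variable {m : ℕ}

lemma sum_sdpMat (A : Matrix (Fin m) (Fin m) ℝ) : ∑ i, sdpMat A i = A + Aᵀ := by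
  ext k l
  simp [sdpMat, Matrix.sum_apply, Finset.sum_add_distrib]

lemma ip_sum_left {ι : Type*} (s : Finset ι) (X : ι → Matrix (Fin m) (Fin m) ℝ)
    (M : Matrix (Fin m) (Fin m) ℝ) : ip (∑ i ∈ s, X i) M = ∑ i ∈ s, ip (X i) M := by
  simp [ip, Matrix.sum_mul, trace_sum]

lemma continuous_ip (X : Matrix (Fin m) (Fin m) ℝ) : Continuous (ip X) :=
  (continuous_const.matrix_mul continuous_id).matrix_trace

lemma ip_sdpMat_diagonal (A : Matrix (Fin m) (Fin m) ℝ) (i : Fin m) (d : Fin m → ℝ) :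
    ip (sdpMat A i) (diagonal d) = 2 * A i i * d i := by
  simp only [ip, trace, sdpMat, diag_apply, mul_diagonal, of_apply]
  rw [Finset.sum_eq_single i (fun j _ hj ↦ by simp [hj]) (by simp), if_pos rfl]
  ring

noncomputable def sdpConstraintMap (A : Matrix (Fin m) (Fin m) ℝ) :
    Matrix (Fin m) (Fin m) ℝ →ₗ[ℝ] (Fin m → ℝ) :=
  LinearMap.pi fun i ↦ traceLinearMap _ ℝ ℝ ∘ₗ LinearMap.mulLeft ℝ (sdpMat A i)

lemma sdpConstraintMap_apply (A : Matrix (Fin m) (Fin m) ℝ) (M : Matrix (Fin m) (Fin m) ℝ)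
    (i : Fin m) : sdpConstraintMap A M i = ip (sdpMat A i) M := rfl

end SDP

section Feasible

variable {n : ℕ} (A : Matrix (Fin (n + 1)) (Fin (n + 1)) ℝ) (p : Fin (n + 1) → ℝ)

lemma isClosed_setOf_feasible : IsClosed {M | Feasible A p M} := by
  simp only [Feasible, Set.ofPred_and, Set.ofPred_forall]
  exact isClosed_setOf_posSemidef.inter <| isClosed_iInter fun i ↦ isClosed_iInter fun _ ↦
    isClosed_eq (continuous_ip _) continuous_const

lemma Feasible.ip_sdpMat_last {A p} {M : Matrix (Fin (n + 1)) (Fin (n + 1)) ℝ}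
    (hM : Feasible A p M) :
    ip (sdpMat A (Fin.last n)) M = ip (A + Aᵀ) M + ∑ i : Fin n, p i.castSucc := by
  rw [← sum_sdpMat, ip_sum_left, Fin.sum_univ_castSucc]
  simp [hM.2 _ (Fin.castSucc_ne_last _)]

lemma feasible_diagonal (hA : (-(A + Aᵀ)).PosDef)
    (hp : ∀ i : Fin (n + 1), i ≠ Fin.last n → 0 ≤ p i) :
    Feasible A p (diagonal fun i ↦ if i = Fin.last n then 0 else p i / (-2 * A i i)) := by
  have hAii (i : Fin (n + 1)) : A i i < 0 := by
    have : 0 < -(A i i + A i i) := hA.diag_pos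
    linarith
  refine ⟨PosSemidef.diagonal fun i ↦ ?_, fun i hi ↦ ?_⟩
  · by_cases hi : i = Fin.last n
    · simp [hi]
    · simpa [hi] using div_nonneg (hp i hi) (by linarith [hAii i] : 0 ≤ -2 * A i i)
  · rw [ip_sdpMat_diagonal, if_neg hi]
    field_simp [(hAii i).ne]

lemma exists_optimal_feasible (hA : (-(A + Aᵀ)).PosDef)
    (hp : ∀ i : Fin (n + 1), i ≠ Fin.last n → 0 ≤ p i) :
    ∃ M₁, Feasible A p M₁ ∧
      ∀ M, Feasible A p M → ip (sdpMat A (Fin.last n)) M ≤ ip (sdpMat A (Fin.last n)) M₁ := by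
  have hD := feasible_diagonal A p hA hp
  set D := diagonal fun i ↦ if i = Fin.last n then 0 else p i / (-2 * A i i)
  have hK : IsCompact ({M | Feasible A p M} ∩
      {M | ip (sdpMat A (Fin.last n)) D ≤ ip (sdpMat A (Fin.last n)) M}) := by
    refine (isCompact_setOf_posSemidef_trace_mul_le hA (ip (-(A + Aᵀ)) D)).of_isClosed_subset
      ((isClosed_setOf_feasible A p).inter (isClosed_le continuous_const (continuous_ip _)))
      fun M ⟨hM, hfM⟩ ↦ ⟨hM.1, ?_⟩
    rw [Set.mem_ofPred_eq, hM.ip_sdpMat_last, hD.ip_sdpMat_last] at hfM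
    simp only [ip, Matrix.neg_mul, trace_neg] at hfM ⊢
    linarith
  obtain ⟨M₁, hM₁, hmax⟩ := (continuous_ip _).continuousOn.exists_isMaxOn'
    (isClosed_setOf_feasible A p) hD <| Filter.eventually_inf_principal.2 <|
      Filter.mem_of_superset hK.compl_mem_cocompact fun M hMK hM ↦
        le_of_not_ge fun h ↦ hMK ⟨hM, h⟩
  exact ⟨M₁, hM₁, fun M hM ↦ hmax hM⟩

end Feasible

lemma le_floor_sqrt_of_mul_add_one_le {r m : ℕ} (h : r * (r + 1) ≤ 2 * m) :
    r ≤ ⌊(√(8 * m + 1) - 1) / 2⌋₊ := by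
  apply Nat.le_floor
  have hsqrt : (2 * r + 1 : ℝ) ≤ √(8 * m + 1) := by
    rw [Real.le_sqrt (by positivity) (by positivity)]
    have : (r * (r + 1) : ℝ) ≤ 2 * m := by exact_mod_cast h
    nlinarith
  linarith

/-- If `A + Aᵀ` is negative definite, the associated semidefinite program (in dimension
`n + 1`) has an optimal solution of rank at most `⌊(√(8(n+1)+1) − 1)/2⌋`. -/
theorem sdp_has_low_rank_optimal_solution (n : ℕ)
    (A : Matrix (Fin (n + 1)) (Fin (n + 1)) ℝ)
    (hA : (-(A + Aᵀ)).PosDef)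
    (p : Fin (n + 1) → ℝ) (hp : ∀ i : Fin (n + 1), i ≠ Fin.last n → 0 ≤ p i) :
    ∃ M₀, Feasible A p M₀ ∧
      M₀.rank ≤ ⌊(Real.sqrt (8 * (n + 1) + 1) - 1) / 2⌋₊ ∧
      ∀ M, Feasible A p M →
        ip (sdpMat A (Fin.last n)) M ≤ ip (sdpMat A (Fin.last n)) M₀ := by
  obtain ⟨M₁, hM₁, hmax⟩ := exists_optimal_feasible A p hA hp
  obtain ⟨M₀, hM₀, hL, hrank⟩ := hM₁.1.exists_rank_mul_add_one_le_map_eq (sdpConstraintMap A)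
  have hip (i : Fin (n + 1)) : ip (sdpMat A i) M₀ = ip (sdpMat A i) M₁ := by
    simpa only [sdpConstraintMap_apply] using congrFun hL i
  refine ⟨M₀, ⟨hM₀, fun i hi ↦ (hip i).trans (hM₁.2 i hi)⟩, ?_, fun M hM ↦ hip _ ▸ hmax M hM⟩
  rw [Module.finrank_fin_fun] at hrank
  exact_mod_cast le_floor_sqrt_of_mul_add_one_le hrank
end

section
/- Let ξ > 0, set x₀ = √(1 + ξ²) − ξ, and let A be the 2×2 matrix with rows (−ξ, −1) and (1, −ξ), so that A_1 has rows (−2ξ, −1), (−1, 0) and A_2 has rows (0, 1), (1, −2ξ). Let p₁ ≥ 0. Then for every 2×2 positive semidefinite matrix M with ⟨A_1, M⟩ = −p₁ one has ⟨A_2, M⟩ ≤ x₀² p₁, and this bound is attained: there exists a positive semidefinite matrix M of rank at most 1 with ⟨A_1, M⟩ = −p₁ and ⟨A_2, M⟩ = x₀² p₁ (namely M = λ mmᵀ with m = (1, x₀)/√(1 + x₀²) and suitable λ ≥ 0). Hence the value of the associated semidefinite program equals x₀² p₁. -/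
/-!
The number `x₀ = √(1 + ξ²) − ξ` is the positive root of `x² + 2ξx = 1`, and this makes
`A₂ + x₀² A₁ = −2ξ vvᵀ` with `v = (x₀, −1)`: the multiplier `x₀²` is a dual certificate.
Hence `⟨A₂, M⟩ + x₀² ⟨A₁, M⟩ = −2ξ vᵀMv ≤ 0` for every `M ⪰ 0`, which is the upper bound.
Equality holds exactly when `vᵀMv = 0`, e.g. for every multiple of `wwᵀ` with `w ∝ (1, x₀) ⊥ v`;
the multiple is fixed by the constraint `⟨A₁, M⟩ = −p₁`.
-/

open Matrix

section TraceInnerProduct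

variable {m : ℕ}

theorem ip_comm (X Y : Matrix (Fin m) (Fin m) ℝ) : ip X Y = ip Y X :=
  trace_mul_comm X Y

theorem ip_add_left (X Y M : Matrix (Fin m) (Fin m) ℝ) : ip (X + Y) M = ip X M + ip Y M := by
  simp only [ip, Matrix.add_mul, trace_add]

theorem ip_smul_left (c : ℝ) (X M : Matrix (Fin m) (Fin m) ℝ) : ip (c • X) M = c * ip X M := by
  simp only [ip, Matrix.smul_mul, trace_smul, smul_eq_mul]

theorem ip_smul_right (c : ℝ) (X M : Matrix (Fin m) (Fin m) ℝ) : ip X (c • M) = c * ip X M := by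
  rw [ip_comm, ip_smul_left, ip_comm]

theorem ip_vecMulVec_self_right (X : Matrix (Fin m) (Fin m) ℝ) (w : Fin m → ℝ) :
    ip X (vecMulVec w w) = w ⬝ᵥ X *ᵥ w := by
  rw [ip, mul_vecMulVec, trace_vecMulVec, dotProduct_comm]

theorem ip_vecMulVec_self_left (v : Fin m → ℝ) (M : Matrix (Fin m) (Fin m) ℝ) :
    ip (vecMulVec v v) M = v ⬝ᵥ M *ᵥ v := by
  rw [ip_comm, ip_vecMulVec_self_right]

theorem ip_vecMulVec_self_vecMulVec_self (v w : Fin m → ℝ) :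
    ip (vecMulVec v v) (vecMulVec w w) = (v ⬝ᵥ w) ^ 2 := by
  rw [ip_vecMulVec_self_right, vecMulVec_mulVec, op_smul_eq_smul, dotProduct_smul, smul_eq_mul,
    dotProduct_comm w v, sq]

theorem Matrix.PosSemidef.ip_vecMulVec_self_nonneg {M : Matrix (Fin m) (Fin m) ℝ}
    (hM : M.PosSemidef) (v : Fin m → ℝ) : 0 ≤ ip (vecMulVec v v) M := by
  simpa [ip_vecMulVec_self_left] using hM.dotProduct_mulVec_nonneg v

theorem posSemidef_smul_vecMulVec_self {c : ℝ} (hc : 0 ≤ c) (w : Fin m → ℝ) :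
    (c • vecMulVec w w).PosSemidef := by
  simpa using (posSemidef_vecMulVec_self_star w).smul hc

theorem rank_smul_vecMulVec_le_one (c : ℝ) (w : Fin m → ℝ) : (c • vecMulVec w w).rank ≤ 1 := by
  rw [← smul_vecMulVec]
  exact rank_vecMulVec_le _ _

end TraceInnerProduct

theorem sqrt_one_add_sq_sub_pos (ξ : ℝ) : 0 < √(1 + ξ ^ 2) - ξ := by
  rw [sub_pos]
  calc ξ ≤ |ξ| := le_abs_self ξ
    _ = √(ξ ^ 2) := (Real.sqrt_sq_eq_abs ξ).symm
    _ < √(1 + ξ ^ 2) := Real.sqrt_lt_sqrt (sq_nonneg ξ) (by linarith)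

theorem sqrt_one_add_sq_sub_sq_add (ξ : ℝ) :
    (√(1 + ξ ^ 2) - ξ) ^ 2 + 2 * ξ * (√(1 + ξ ^ 2) - ξ) = 1 := by
  linear_combination Real.sq_sqrt (by positivity : (0 : ℝ) ≤ 1 + ξ ^ 2)

theorem twoSpin_certificate {ξ x : ℝ} (hx : x ^ 2 + 2 * ξ * x = 1) :
    !![0, 1; 1, -2 * ξ] + x ^ 2 • !![-2 * ξ, -1; -1, 0] =
      (-2 * ξ) • vecMulVec ![x, -1] ![x, -1] := by
  ext i j
  fin_cases i <;> fin_cases j <;> simp <;> linarith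

theorem twoSpin_ip_add_sq_mul_ip {ξ x : ℝ} (hx : x ^ 2 + 2 * ξ * x = 1)
    (M : Matrix (Fin 2) (Fin 2) ℝ) :
    ip !![0, 1; 1, -2 * ξ] M + x ^ 2 * ip !![-2 * ξ, -1; -1, 0] M =
      -2 * ξ * ip (vecMulVec ![x, -1] ![x, -1]) M := by
  rw [← ip_smul_left, ← ip_add_left, twoSpin_certificate hx, ip_smul_left]

theorem twoSpin_ip_le {ξ x : ℝ} (hξ : 0 ≤ ξ) (hx : x ^ 2 + 2 * ξ * x = 1)
    {M : Matrix (Fin 2) (Fin 2) ℝ} (hM : M.PosSemidef) :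
    ip !![0, 1; 1, -2 * ξ] M ≤ x ^ 2 * -ip !![-2 * ξ, -1; -1, 0] M := by
  have := twoSpin_ip_add_sq_mul_ip hx M
  linarith [mul_nonneg hξ (hM.ip_vecMulVec_self_nonneg ![x, -1])]

theorem twoSpin_ip_eq_of_dotProduct_eq_zero {ξ x : ℝ} (hx : x ^ 2 + 2 * ξ * x = 1)
    {w : Fin 2 → ℝ} (hw : ![x, -1] ⬝ᵥ w = 0) (c : ℝ) :
    ip !![0, 1; 1, -2 * ξ] (c • vecMulVec w w) =
      x ^ 2 * -ip !![-2 * ξ, -1; -1, 0] (c • vecMulVec w w) := by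
  have := twoSpin_ip_add_sq_mul_ip hx (c • vecMulVec w w)
  rw [ip_smul_right c (vecMulVec _ _), ip_vecMulVec_self_vecMulVec_self, hw] at this
  linarith

theorem dotProduct_normalized_eq_zero (x : ℝ) :
    ![x, -1] ⬝ᵥ (fun i => ![1, x] i / √(1 + x ^ 2)) = 0 := by
  simp only [dotProduct, Fin.sum_univ_two, cons_val_zero, cons_val_one, cons_val_fin_one]
  ring

theorem twoSpin_ip_smul_vecMulVec_normalized (ξ x c : ℝ) :
    ip !![-2 * ξ, -1; -1, 0]
        (c • vecMulVec (fun i => ![1, x] i / √(1 + x ^ 2)) (fun i => ![1, x] i / √(1 + x ^ 2))) =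
      -(2 * c * (ξ + x) / (1 + x ^ 2)) := by
  set s := √(1 + x ^ 2)
  have hs : s ^ 2 = 1 + x ^ 2 := Real.sq_sqrt (by positivity)
  have : s ≠ 0 := by positivity
  rw [ip_smul_right, ip_vecMulVec_self_right, ← hs]
  simp only [dotProduct, mulVec, Fin.sum_univ_two, of_apply, cons_val', cons_val_zero,
    cons_val_one, cons_val_fin_one]
  field_simp
  ring

/-- For `A = !![-ξ, -1; 1, -ξ]`, so that `A₁ = !![-2ξ, -1; -1, 0]` and
`A₂ = !![0, 1; 1, -2ξ]`, and `p₁ ≥ 0`: every `M ⪰ 0` with `⟨A₁, M⟩ = -p₁` satisfies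
`⟨A₂, M⟩ ≤ x₀² p₁` where `x₀ = √(1 + ξ²) − ξ`, the bound is attained by a positive
semidefinite matrix of rank at most 1, and hence the value of the associated semidefinite
program equals `x₀² p₁`. -/
theorem sdp_two_spin_value (ξ : ℝ) (hξ : 0 < ξ)
    (x₀ : ℝ) (hx₀ : x₀ = Real.sqrt (1 + ξ ^ 2) - ξ)
    (p₁ : ℝ) (hp₁ : 0 ≤ p₁) :
    (∀ M : Matrix (Fin 2) (Fin 2) ℝ, M.PosSemidef →
      ip !![-2 * ξ, -1; -1, 0] M = -p₁ →
      ip !![0, 1; 1, -2 * ξ] M ≤ x₀ ^ 2 * p₁) ∧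
    (∃ M : Matrix (Fin 2) (Fin 2) ℝ, M.PosSemidef ∧ M.rank ≤ 1 ∧
      (∃ lam : ℝ, 0 ≤ lam ∧
        M = lam • Matrix.of (fun i j : Fin 2 =>
          (![1, x₀] i / Real.sqrt (1 + x₀ ^ 2)) *
          (![1, x₀] j / Real.sqrt (1 + x₀ ^ 2)))) ∧
      ip !![-2 * ξ, -1; -1, 0] M = -p₁ ∧
      ip !![0, 1; 1, -2 * ξ] M = x₀ ^ 2 * p₁) ∧
    IsGreatest {E : ℝ | ∃ M : Matrix (Fin 2) (Fin 2) ℝ, M.PosSemidef ∧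
      ip !![-2 * ξ, -1; -1, 0] M = -p₁ ∧ ip !![0, 1; 1, -2 * ξ] M = E}
      (x₀ ^ 2 * p₁) := by
  have hx : x₀ ^ 2 + 2 * ξ * x₀ = 1 := hx₀ ▸ sqrt_one_add_sq_sub_sq_add ξ
  have hx_pos : 0 < x₀ := hx₀ ▸ sqrt_one_add_sq_sub_pos ξ
  have upper : ∀ M : Matrix (Fin 2) (Fin 2) ℝ, M.PosSemidef →
      ip !![-2 * ξ, -1; -1, 0] M = -p₁ → ip !![0, 1; 1, -2 * ξ] M ≤ x₀ ^ 2 * p₁ :=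
    fun M hM h₁ => by simpa only [h₁, neg_neg] using twoSpin_ip_le hξ.le hx hM
  set w : Fin 2 → ℝ := fun i => ![1, x₀] i / √(1 + x₀ ^ 2)
  set lam := p₁ * (1 + x₀ ^ 2) / (2 * (ξ + x₀)) with hlam_def
  have hlam : 0 ≤ lam := by positivity
  have h₁ : ip !![-2 * ξ, -1; -1, 0] (lam • vecMulVec w w) = -p₁ := by
    have : ξ + x₀ ≠ 0 := by positivity
    rw [twoSpin_ip_smul_vecMulVec_normalized, hlam_def]
    field_simp
  have h₂ : ip !![0, 1; 1, -2 * ξ] (lam • vecMulVec w w) = x₀ ^ 2 * p₁ := by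
    rw [twoSpin_ip_eq_of_dotProduct_eq_zero hx (dotProduct_normalized_eq_zero x₀), h₁, neg_neg]
  have hpsd := posSemidef_smul_vecMulVec_self hlam w
  refine ⟨upper, ⟨_, hpsd, rank_smul_vecMulVec_le_one lam w, ⟨lam, hlam, rfl⟩, h₁, h₂⟩,
    ⟨_, hpsd, h₁, h₂⟩, ?_⟩
  rintro E ⟨M, hM, hM₁, rfl⟩
  exact upper M hM hM₁
end
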